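/- Projections of the combined (spectral-width) embedding yield eigenvectors of both extreme eigenvalues (Proposition 7): let w ∈ ℝ^N with w_i ≥ 0 for all i, and set λ₂ := λ2(L(w)) (second smallest eigenvalue) and λₙ := λn(L(w)) (largest eigenvalue). Let U and V be n×n real matrices with X := UᵀU and Y := VᵀV satisfying the complementary-slackness conditions ⟨X, e_n e_nᵀ⟩ = 0, ⟨X, L(w) − λ₂·I⟩ = 0, and ⟨Y, λₙ·I − L(w)⟩ = 0. Then for every p ∈ ℝ^n: L(w)·(Uᵀp) = λ₂·(Uᵀp) and L(w)·(Vᵀp) = λₙ·(Vᵀp). -/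

import Mathlib

/-!
Complementary slackness against a positive semidefinite `M = BᴴB` forces `M Uᵀ = 0`, since
`⟨UᵀU, M⟩` is the squared Frobenius norm of `B Uᵀ`. For `λₙ` take `M = λₙ I - L(w)`. For `λ₂`
take `M = L(w) - λ₂ I + (λ₂ / n) e eᵀ`: as `L(w)` is positive semidefinite with `L(w) e = 0`, when
`λ₂ > 0` the vector `e` spans the eigenspace of the only eigenvalue below `λ₂`, and the rank-one
term lifts exactly that direction. Since `⟨UᵀU, e eᵀ⟩ = 0` also gives `e eᵀ Uᵀ = 0`, what remains
is `(L(w) - λ₂ I) Uᵀ = 0`.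
-/

open Matrix

/-- Eigenvalues of a real symmetric matrix, listed in nondecreasing order with multiplicity
(junk value `0` if the matrix is not Hermitian). -/
noncomputable def sortedEigs {m : ℕ} (A : Matrix (Fin m) (Fin m) ℝ) : Fin m → ℝ :=
  if hA : A.IsHermitian then fun k => hA.eigenvalues (Tuple.sort hA.eigenvalues k) else 0

/-- The supra-Laplacian `L(w) = [[L1 + W, -W], [-W, L2 + W]]` of a two-layer multiplex,
as a matrix indexed by `Fin (N + N)`. -/
noncomputable def supraLap {N : ℕ} (L1 L2 : Matrix (Fin N) (Fin N) ℝ) (w : Fin N → ℝ) :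
    Matrix (Fin (N + N)) (Fin (N + N)) ℝ :=
  Matrix.reindex finSumFinEquiv finSumFinEquiv
    (Matrix.fromBlocks (L1 + Matrix.diagonal w) (-(Matrix.diagonal w))
      (-(Matrix.diagonal w)) (L2 + Matrix.diagonal w))

/-- The interlayer edge matrix `L_{i,i+N} = (δ_i - δ_{i+N})(δ_i - δ_{i+N})ᵀ`. -/
noncomputable def interE {N : ℕ} (i : Fin N) : Matrix (Fin (N + N)) (Fin (N + N)) ℝ :=
  Matrix.vecMulVec
    (Pi.single (Fin.castAdd N i) 1 - Pi.single (Fin.natAdd N i) 1)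
    (Pi.single (Fin.castAdd N i) 1 - Pi.single (Fin.natAdd N i) 1)

/-- The matrix inner product `⟨A, B⟩ = trace(AᵀB)`. -/
noncomputable def mip {m : ℕ} (A B : Matrix (Fin m) (Fin m) ℝ) : ℝ := (Aᵀ * B).trace

/-- The block-diagonal Laplacian `L0 = diag(L1, L2)` of the disjoint union of the layers. -/
noncomputable def L0big {N : ℕ} (L1 L2 : Matrix (Fin N) (Fin N) ℝ) :
    Matrix (Fin (N + N)) (Fin (N + N)) ℝ :=
  Matrix.reindex finSumFinEquiv finSumFinEquiv (Matrix.fromBlocks L1 0 0 L2)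

/-- The vector `z = (e; -e) ∈ ℝ^n`. -/
noncomputable def zvec (N : ℕ) : Fin (N + N) → ℝ :=
  fun k => if (k : ℕ) < N then 1 else -1

open scoped ComplexOrder MatrixOrder in
theorem Matrix.PosSemidef.mul_conjTranspose_eq_zero_of_trace_eq_zero {n m 𝕜 : Type*}
    [Fintype n] [Fintype m] [RCLike 𝕜] {M : Matrix n n 𝕜} {Q : Matrix m n 𝕜}
    (hM : M.PosSemidef) (h : (Qᴴ * Q * M).trace = 0) : M * Qᴴ = 0 := by
  classical
  obtain ⟨B, rfl⟩ := CStarAlgebra.nonneg_iff_eq_star_mul_self.mp hM.nonneg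
  have hBQ : B * Qᴴ = 0 := by
    rw [← trace_conjTranspose_mul_self_eq_zero_iff, ← h, Matrix.mul_assoc, trace_mul_comm Qᴴ]
    simp only [conjTranspose_mul, conjTranspose_conjTranspose, star_eq_conjTranspose,
      Matrix.mul_assoc]
  rw [Matrix.mul_assoc, hBQ, Matrix.mul_zero]

theorem mip_add_smul {m : ℕ} (X B C : Matrix (Fin m) (Fin m) ℝ) (c : ℝ) :
    mip X (B + c • C) = mip X B + c * mip X C := by
  rw [mip, mip, mip, Matrix.mul_add, trace_add, Matrix.mul_smul, trace_smul, smul_eq_mul]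

theorem Matrix.PosSemidef.mul_transpose_eq_zero_of_mip_eq_zero {m : ℕ}
    {M Q : Matrix (Fin m) (Fin m) ℝ} (hM : M.PosSemidef) (h : mip (Qᵀ * Q) M = 0) :
    M * Qᵀ = 0 := by
  rw [mip, transpose_mul, transpose_transpose] at h
  simpa using hM.mul_conjTranspose_eq_zero_of_trace_eq_zero (Q := Q) (by simpa using h)

theorem Matrix.PosSemidef.fromBlocks_add_neg_add {n R : Type*} [Fintype n] [DecidableEq n]
    [CommRing R] [PartialOrder R] [StarRing R] [AddLeftMono R]
    {A B D : Matrix n n R} (hA : A.PosSemidef) (hB : B.PosSemidef) (hD : D.PosSemidef) :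
    (fromBlocks (A + D) (-D) (-D) (B + D)).PosSemidef := by
  let P₁ : Matrix n (n ⊕ n) R := fromCols 1 0
  let P₂ : Matrix n (n ⊕ n) R := fromCols 0 1
  let Δ : Matrix n (n ⊕ n) R := fromCols 1 (-1)
  have h : fromBlocks (A + D) (-D) (-D) (B + D) = P₁ᴴ * A * P₁ + P₂ᴴ * B * P₂ + Δᴴ * D * Δ := by
    ext (i | i) (j | j) <;>
      simp [P₁, P₂, Δ, conjTranspose_fromCols_eq_fromRows_conjTranspose]
  rw [h]
  exact ((hA.conjTranspose_mul_mul_same _).add (hB.conjTranspose_mul_mul_same _)).add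
    (hD.conjTranspose_mul_mul_same _)

namespace Matrix.IsHermitian

variable {n : Type*} [Fintype n] [DecidableEq n] {A : Matrix n n ℝ} (hA : A.IsHermitian)

theorem transpose_eigenvectorUnitary_mulVec_mulVec (x : n → ℝ) :
    (hA.eigenvectorUnitary : Matrix n n ℝ)ᵀ *ᵥ (A *ᵥ x) =
      hA.eigenvalues * ((hA.eigenvectorUnitary : Matrix n n ℝ)ᵀ *ᵥ x) := by
  ext i
  have hAt : Aᵀ = A := by simpa using hA.eq
  simp only [mulVec, eigenvectorUnitary_transpose_apply, Pi.mul_apply]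
  rw [dotProduct_mulVec, ← mulVec_transpose, hAt, mulVec_eigenvectorBasis, smul_dotProduct,
    smul_eq_mul]

theorem dotProduct_transpose_eigenvectorUnitary_mulVec (u v : n → ℝ) :
    ((hA.eigenvectorUnitary : Matrix n n ℝ)ᵀ *ᵥ u) ⬝ᵥ
      ((hA.eigenvectorUnitary : Matrix n n ℝ)ᵀ *ᵥ v) = u ⬝ᵥ v := by
  have h := mem_unitaryGroup_iff.mp hA.eigenvectorUnitary.2
  rw [star_eq_conjTranspose, conjTranspose_eq_transpose_of_trivial] at h
  rw [dotProduct_mulVec, mulVec_transpose, vecMul_vecMul, h, vecMul_one]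

theorem dotProduct_mulVec_eq_sum (x : n → ℝ) :
    x ⬝ᵥ (A *ᵥ x) = ∑ i, hA.eigenvalues i *
      ((hA.eigenvectorUnitary : Matrix n n ℝ)ᵀ *ᵥ x) i ^ 2 := by
  rw [← hA.dotProduct_transpose_eigenvectorUnitary_mulVec,
    hA.transpose_eigenvectorUnitary_mulVec_mulVec, dotProduct]
  exact Finset.sum_congr rfl fun i _ => by simp only [Pi.mul_apply]; ring

theorem dotProduct_self_eq_sum (x : n → ℝ) :
    x ⬝ᵥ x = ∑ i, ((hA.eigenvectorUnitary : Matrix n n ℝ)ᵀ *ᵥ x) i ^ 2 := by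
  rw [← hA.dotProduct_transpose_eigenvectorUnitary_mulVec, dotProduct]
  exact Finset.sum_congr rfl fun i _ => sq _ |>.symm

theorem posSemidef_smul_one_sub {c : ℝ} (h : ∀ i, hA.eigenvalues i ≤ c) :
    (c • 1 - A).PosSemidef := by
  refine .of_dotProduct_mulVec_nonneg ((isHermitian_one.smul (.all c)).sub hA) fun x => ?_
  rw [star_trivial, sub_mulVec, smul_mulVec, one_mulVec, dotProduct_sub, dotProduct_smul,
    smul_eq_mul, hA.dotProduct_mulVec_eq_sum, hA.dotProduct_self_eq_sum, Finset.mul_sum,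
    ← Finset.sum_sub_distrib]
  exact Finset.sum_nonneg fun i _ => by
    rw [← sub_mul]; exact mul_nonneg (sub_nonneg.2 (h i)) (sq_nonneg _)

end Matrix.IsHermitian

theorem Matrix.posSemidef_vecMulVec_self {n : Type*} [Fintype n] (e : n → ℝ) :
    (vecMulVec e e).PosSemidef := by
  simpa using posSemidef_vecMulVec_self_star e

theorem Matrix.PosSemidef.sub_smul_one_add_smul_vecMulVec {n : Type*} [Fintype n]
    [DecidableEq n] {A : Matrix n n ℝ} (hA : A.PosSemidef) {e : n → ℝ} (he : A *ᵥ e = 0)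
    {c t : ℝ} (hc : 0 ≤ c) (ht : 0 ≤ t) (hct : c ≤ t * (e ⬝ᵥ e)) {j : n}
    (hj : ∀ i ≠ j, c ≤ hA.1.eigenvalues i) :
    (A - c • 1 + t • vecMulVec e e).PosSemidef := by
  have hee : (t • vecMulVec e e).PosSemidef := (posSemidef_vecMulVec_self e).smul ht
  rcases hc.eq_or_lt with rfl | hc
  · simpa using hA.add hee
  set P := (hA.1.eigenvectorUnitary : Matrix n n ℝ)
  set μ := hA.1.eigenvalues
  set d := Pᵀ *ᵥ e
  -- every eigenvalue but `μ j` is positive, so `e` lies along the `j`-th eigenvector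
  have hd : ∀ i ≠ j, d i = 0 := fun i hi => by
    have := congrFun (hA.1.transpose_eigenvectorUnitary_mulVec_mulVec e) i
    rw [he, mulVec_zero, Pi.zero_apply, Pi.mul_apply, eq_comm] at this
    exact (mul_eq_zero.mp this).resolve_left (hc.trans_le (hj i hi)).ne'
  have hd_dot (v : n → ℝ) : d ⬝ᵥ v = d j * v j :=
    Fintype.sum_eq_single j fun i hi => by rw [hd i hi, zero_mul]
  refine .of_dotProduct_mulVec_nonneg
    ((hA.1.sub (isHermitian_one.smul (.all c))).add hee.1) fun x => ?_
  set y := Pᵀ *ᵥ x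
  have hex : e ⬝ᵥ x = d j * y j := by
    rw [← hA.1.dotProduct_transpose_eigenvectorUnitary_mulVec, hd_dot]
  have hct' : c ≤ t * d j ^ 2 := by
    rwa [← hA.1.dotProduct_transpose_eigenvectorUnitary_mulVec, hd_dot, ← sq] at hct
  have hspec : x ⬝ᵥ (A *ᵥ x) - c * (x ⬝ᵥ x) = ∑ i, (μ i - c) * y i ^ 2 := by
    rw [hA.1.dotProduct_mulVec_eq_sum, hA.1.dotProduct_self_eq_sum, Finset.mul_sum,
      ← Finset.sum_sub_distrib]
    exact Finset.sum_congr rfl fun i _ => by ring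
  have hquad : star x ⬝ᵥ ((A - c • 1 + t • vecMulVec e e) *ᵥ x) =
      ∑ i, (μ i - c) * y i ^ 2 + t * (d j * y j) ^ 2 := by
    rw [star_trivial, add_mulVec, sub_mulVec, smul_mulVec, smul_mulVec, one_mulVec,
      vecMulVec_mulVec, dotProduct_add, dotProduct_sub, dotProduct_smul, dotProduct_smul,
      dotProduct_smul, ← hspec, ← hex]
    simp [sq, dotProduct_comm x e]
  have hrest : 0 ≤ ∑ i ∈ Finset.univ.erase j, (μ i - c) * y i ^ 2 :=
    Finset.sum_nonneg fun i hi =>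
      mul_nonneg (sub_nonneg.2 (hj i (Finset.ne_of_mem_erase hi))) (sq_nonneg _)
  rw [hquad, ← Finset.add_sum_erase _ _ (Finset.mem_univ j)]
  nlinarith [mul_nonneg (hA.eigenvalues_nonneg j) (sq_nonneg (y j)),
    mul_nonneg (sub_nonneg.2 hct') (sq_nonneg (y j))]

theorem sortedEigs_eq {m : ℕ} {A : Matrix (Fin m) (Fin m) ℝ} (hA : A.IsHermitian) (k : Fin m) :
    sortedEigs A k = hA.eigenvalues (Tuple.sort hA.eigenvalues k) := by
  rw [sortedEigs, dif_pos hA]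

theorem eigenvalues_le_sortedEigs_last {m : ℕ} {A : Matrix (Fin m) (Fin m) ℝ}
    (hA : A.IsHermitian) (hm : 0 < m) (i : Fin m) :
    hA.eigenvalues i ≤ sortedEigs A ⟨m - 1, by omega⟩ := by
  have hi : (Tuple.sort hA.eigenvalues).symm i ≤ ⟨m - 1, by omega⟩ :=
    Fin.le_def.2 (Nat.le_sub_one_of_lt (Fin.is_lt _))
  simpa [sortedEigs_eq hA] using Tuple.monotone_sort hA.eigenvalues hi

theorem exists_forall_ne_sortedEigs_one_le {m : ℕ} {A : Matrix (Fin m) (Fin m) ℝ}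
    (hA : A.IsHermitian) (hm : 1 < m) :
    ∃ j, ∀ i ≠ j, sortedEigs A ⟨1, hm⟩ ≤ hA.eigenvalues i := by
  refine ⟨Tuple.sort hA.eigenvalues ⟨0, by omega⟩, fun i hi => ?_⟩
  have h0 : (Tuple.sort hA.eigenvalues).symm i ≠ ⟨0, by omega⟩ :=
    fun h => hi (by rw [← h, Equiv.apply_symm_apply])
  have h1 : ⟨1, hm⟩ ≤ (Tuple.sort hA.eigenvalues).symm i :=
    Fin.le_def.2 (Nat.one_le_iff_ne_zero.2 (Fin.val_ne_of_ne h0))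
  simpa [sortedEigs_eq hA] using Tuple.monotone_sort hA.eigenvalues h1

theorem supraLap_posSemidef {N : ℕ} {L1 L2 : Matrix (Fin N) (Fin N) ℝ} (hL1 : L1.PosSemidef)
    (hL2 : L2.PosSemidef) {w : Fin N → ℝ} (hw : ∀ i, 0 ≤ w i) :
    (supraLap L1 L2 w).PosSemidef := by
  rw [supraLap, reindex_apply, posSemidef_submatrix_equiv]
  exact hL1.fromBlocks_add_neg_add hL2 (PosSemidef.diagonal hw)

theorem supraLap_mulVec_one {N : ℕ} {L1 L2 : Matrix (Fin N) (Fin N) ℝ}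
    (hL1e : L1 *ᵥ (fun _ => (1 : ℝ)) = 0) (hL2e : L2 *ᵥ (fun _ => (1 : ℝ)) = 0)
    (w : Fin N → ℝ) : supraLap L1 L2 w *ᵥ (fun _ => (1 : ℝ)) = 0 := by
  have h : fromBlocks (L1 + diagonal w) (-diagonal w) (-diagonal w) (L2 + diagonal w) *ᵥ
      (fun _ => (1 : ℝ)) = 0 := by
    ext (i | i) <;>
      simp [fromBlocks_mulVec, Function.comp_def, add_mulVec, mulVec_diagonal, hL1e, hL2e]
  rw [supraLap, reindex_apply, submatrix_mulVec_equiv]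
  exact congrArg (· ∘ _) h

/-- Projections of the combined (spectral-width) embedding yield eigenvectors of both
extreme eigenvalues: under the complementary-slackness conditions for `X = UᵀU` (with `λ₂`)
and `Y = VᵀV` (with `λₙ`), every projection `Uᵀp` is a `λ₂`-eigenvector and every
projection `Vᵀp` is a `λₙ`-eigenvector of `L(w)`. -/
theorem stmt9 (N : ℕ) (hN : 1 ≤ N)
    (L1 L2 : Matrix (Fin N) (Fin N) ℝ)
    (hL1 : L1.PosSemidef) (hL2 : L2.PosSemidef)
    (hL1e : L1 *ᵥ (fun _ => (1 : ℝ)) = 0) (hL2e : L2 *ᵥ (fun _ => (1 : ℝ)) = 0)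
    (w : Fin N → ℝ) (hw : ∀ i, 0 ≤ w i)
    (lam2 : ℝ) (hlam2 : lam2 = sortedEigs (supraLap L1 L2 w) ⟨1, by omega⟩)
    (lamn : ℝ) (hlamn : lamn = sortedEigs (supraLap L1 L2 w) ⟨N + N - 1, by omega⟩)
    (U V : Matrix (Fin (N + N)) (Fin (N + N)) ℝ)
    (hXe : mip (Uᵀ * U) (Matrix.vecMulVec (fun _ => (1 : ℝ)) (fun _ => (1 : ℝ))) = 0)
    (hXs : mip (Uᵀ * U)
      (supraLap L1 L2 w - lam2 • (1 : Matrix (Fin (N + N)) (Fin (N + N)) ℝ)) = 0)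
    (hYs : mip (Vᵀ * V)
      (lamn • (1 : Matrix (Fin (N + N)) (Fin (N + N)) ℝ) - supraLap L1 L2 w) = 0) :
    ∀ p : Fin (N + N) → ℝ,
      (supraLap L1 L2 w) *ᵥ (Uᵀ *ᵥ p) = lam2 • (Uᵀ *ᵥ p) ∧
      (supraLap L1 L2 w) *ᵥ (Vᵀ *ᵥ p) = lamn • (Vᵀ *ᵥ p) := by
  intro p
  set A := supraLap L1 L2 w
  set e : Fin (N + N) → ℝ := fun _ => 1
  have hA : A.PosSemidef := supraLap_posSemidef hL1 hL2 hw
  obtain ⟨j, hj⟩ := exists_forall_ne_sortedEigs_one_le hA.1 (by omega : 1 < N + N)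
  rw [← hlam2] at hj
  have hlam2_nonneg : 0 ≤ lam2 := by
    rw [hlam2, sortedEigs_eq hA.1]; exact hA.eigenvalues_nonneg _
  have hee : e ⬝ᵥ e = (N + N : ℕ) := by simp [e, dotProduct]
  have hM₂ : (A - lam2 • 1 + (lam2 / (N + N : ℕ)) • vecMulVec e e).PosSemidef :=
    hA.sub_smul_one_add_smul_vecMulVec (supraLap_mulVec_one hL1e hL2e w) hlam2_nonneg
      (by positivity)
      (by rw [hee, div_mul_cancel₀ _ (by norm_cast; omega)]) hj
  have hM₂U : mip (Uᵀ * U) (A - lam2 • 1 + (lam2 / (N + N : ℕ)) • vecMulVec e e) = 0 := by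
    rw [mip_add_smul, hXs, hXe, mul_zero, add_zero]
  have heU := (posSemidef_vecMulVec_self e).mul_transpose_eq_zero_of_mip_eq_zero hXe
  have hU := hM₂.mul_transpose_eq_zero_of_mip_eq_zero hM₂U
  rw [Matrix.add_mul, smul_mul_assoc, heU, smul_zero, add_zero, Matrix.sub_mul, smul_mul_assoc,
    Matrix.one_mul, sub_eq_zero] at hU
  have hV := (hA.1.posSemidef_smul_one_sub fun i =>
    (eigenvalues_le_sortedEigs_last hA.1 (by omega) i).trans_eq hlamn.symm
    ).mul_transpose_eq_zero_of_mip_eq_zero hYs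
  rw [Matrix.sub_mul, smul_mul_assoc, Matrix.one_mul, sub_eq_zero, eq_comm] at hV
  exact ⟨by rw [mulVec_mulVec, hU, smul_mulVec], by rw [mulVec_mulVec, hV, smul_mulVec]⟩
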